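/- For m ≡ 3 (mod 4) and n even, the sign of the cyclic left shift σ on Σ^n is −1. -/

import Mathlib

/-!
The shift is the permutation of coordinates induced by a rotation of `Fin n`, and a permutation
`p` of the coordinates permutes `Σ^n` with sign `sign p ^ e`, where `e = m^(n-1) (m-1) / 2`:
by multiplicativity it suffices to check transpositions, and a transposition `(i j)` of
coordinates is an involution moving exactly the `m^n - m^(n-1)` words with `x i ≠ x j`.
For `m ≡ 3 (mod 4)` the exponent `e` is odd, and an `n`-cycle with `n` even is odd.
-/

/-- The cyclic left shift on `Fin n → α`: `(x_1,…,x_n) ↦ (x_2,…,x_n,x_1)`. -/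
def cycShift {α : Type*} {n : ℕ} (x : Fin n → α) : Fin n → α :=
  fun i => if h : (i : ℕ) + 1 < n then x ⟨(i : ℕ) + 1, h⟩
           else x ⟨0, Nat.lt_of_le_of_lt (Nat.zero_le _) i.isLt⟩

open Equiv

section CoordPerm

variable {ι : Type*} (A : Type*)

def coordPerm : Perm ι →* Perm (ι → A) where
  toFun p := p.arrowCongr (Equiv.refl A)
  map_one' := rfl
  map_mul' _ _ := rfl

variable {A}

@[simp]
theorem coordPerm_apply (p : Perm ι) (x : ι → A) (i : ι) :
    coordPerm A p x i = x (p⁻¹ i) :=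
  rfl

variable [DecidableEq ι]

theorem mem_fixedPoints_coordPerm_swap {i j : ι} {x : ι → A} :
    x ∈ Function.fixedPoints (coordPerm A (swap i j)) ↔ x i = x j := by
  refine ⟨fun hx => ?_, fun hx => funext fun k => ?_⟩
  · simpa using congrFun hx j
  · rw [coordPerm_apply, swap_inv]
    rcases eq_or_ne k i with rfl | hki
    · simpa using hx.symm
    rcases eq_or_ne k j with rfl | hkj
    · simpa using hx
    · rw [swap_apply_of_ne_of_ne hki hkj]

def fixedPointsCoordPermSwapEquiv {i j : ι} (hij : i ≠ j) :
    Function.fixedPoints (coordPerm A (swap i j)) ≃ ({k // k ≠ j} → A) where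
  toFun x k := x.1 k
  invFun y := ⟨fun k => if hk : k = j then y ⟨i, hij⟩ else y ⟨k, hk⟩,
    mem_fixedPoints_coordPerm_swap.2 (by simp [hij])⟩
  left_inv x := by
    ext k
    by_cases hk : k = j
    · subst hk; simpa using mem_fixedPoints_coordPerm_swap.1 x.2
    · simp [hk]
  right_inv y := by ext k; simp [k.2]

variable [Fintype ι] [Fintype A] [DecidableEq A]

theorem card_fixedPoints_coordPerm_swap {i j : ι} (hij : i ≠ j) :
    Fintype.card (Function.fixedPoints (coordPerm A (swap i j))) =
      Fintype.card A ^ (Fintype.card ι - 1) := by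
  rw [Fintype.card_congr (fixedPointsCoordPermSwapEquiv hij), Fintype.card_fun,
    Fintype.card_subtype_compl, Fintype.card_subtype_eq]

theorem sign_coordPerm_swap {i j : ι} (hij : i ≠ j) :
    Perm.sign (coordPerm A (swap i j)) =
      (-1) ^ (Fintype.card A ^ (Fintype.card ι - 1) * (Fintype.card A - 1) / 2) := by
  have hι : Fintype.card ι = Fintype.card ι - 1 + 1 :=
    (Nat.sub_add_cancel (Fintype.card_pos_iff.2 ⟨i⟩)).symm
  have hsq : coordPerm A (swap i j) ^ 2 = 1 := by rw [← map_pow, sq, swap_mul_self, map_one]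
  rw [Perm.sign_of_pow_two_eq_one hsq, card_fixedPoints_coordPerm_swap hij, Fintype.card_fun, hι,
    Nat.add_sub_cancel, pow_succ, ← Nat.mul_sub_one]

theorem sign_coordPerm (p : Perm ι) :
    Perm.sign (coordPerm A p) =
      Perm.sign p ^ (Fintype.card A ^ (Fintype.card ι - 1) * (Fintype.card A - 1) / 2) := by
  induction p using Perm.swap_induction_on with
  | one => simp
  | swap_mul f i j hij ih =>
    rw [map_mul, map_mul, Perm.sign_mul, ih, sign_coordPerm_swap hij, Perm.sign_swap hij, mul_pow]

end CoordPerm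

theorem odd_pow_mul_sub_one_div_two {m : ℕ} (hm : m % 4 = 3) (k : ℕ) :
    Odd (m ^ k * (m - 1) / 2) := by
  obtain ⟨j, rfl⟩ : ∃ j, m = 4 * j + 3 := ⟨m / 4, by omega⟩
  have hodd : Odd (4 * j + 3) := ⟨2 * j + 1, by ring⟩
  rw [show 4 * j + 3 - 1 = 2 * (2 * j + 1) by omega, mul_left_comm,
    Nat.mul_div_cancel_left _ two_pos]
  exact hodd.pow.mul (odd_two_mul_add_one j)

theorem cycShift_apply {α : Type*} {n : ℕ} (x : Fin n → α) (i : Fin n) :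
    cycShift x i = x (finRotate n i) := by
  obtain _ | n := n
  · exact i.elim0
  rw [cycShift]
  split_ifs with h
  · have hi : i ≠ Fin.last n := fun hi => by simp [hi] at h
    congr 1; ext; rw [coe_finRotate_of_ne_last hi]
  · rw [show i = Fin.last n by ext; simp; omega, finRotate_last]; rfl

/-- for `m ≡ 3 (mod 4)` and `n` even, the sign of the cyclic
left shift `σ` on `Σ^n` (with `|Σ| = m`) is `−1`. -/
theorem sign_shift_neg_one (m n : ℕ) (hm : m % 4 = 3) (hn : Even n) (hn0 : 0 < n)
    (A : Type) [Fintype A] [DecidableEq A] (hA : Fintype.card A = m)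
    (s : Equiv.Perm (Fin n → A)) (hs : ∀ x, s x = cycShift x) :
    Equiv.Perm.sign s = -1 := by
  have hσ : s = coordPerm A (finRotate n)⁻¹ := by
    ext x i
    rw [hs, cycShift_apply, coordPerm_apply, inv_inv]
  have hrot : Perm.sign (finRotate n) = -1 := by
    rw [sign_finRotate, (Nat.Even.sub_odd hn0 hn odd_one).neg_one_pow]
  rw [hσ, sign_coordPerm, map_inv, hrot, inv_neg_one, Fintype.card_fin, hA,
    (odd_pow_mul_sub_one_div_two hm _).neg_one_pow]
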